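/- Let (v₀, v₁, v₂, v₃) be four affinely independent points of ℝ³ and for each i let μᵢ : ℝ³ → ℝ be the corresponding barycentric coordinate function, i.e., the unique affine function with μᵢ(vⱼ) = δᵢⱼ; since μᵢ is affine its gradient ∇μᵢ is a constant vector. For distinct i, j, k define the Whitney vector field of the triangular face [vᵢ, vⱼ, v_k] by F = 2(μᵢ ∇μⱼ × ∇μ_k − μⱼ ∇μᵢ × ∇μ_k + μ_k ∇μᵢ × ∇μⱼ), where × is the cross product on ℝ³. Then the flux of F through the face [vᵢ, vⱼ, v_k] equals 1: ∫∫_{s,t ≥ 0, s+t ≤ 1} ⟨F(vᵢ + s(vⱼ − vᵢ) + t(v_k − vᵢ)), (vⱼ − vᵢ) × (v_k − vᵢ)⟩ ds dt = 1. -/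

import Mathlib

open Matrix MeasureTheory

/-! On the face, parametrised by `(s, t)`, the barycentric coordinates are
`μᵢ = 1 - s - t`, `μⱼ = s`, `μₖ = t`. By the Binet–Cauchy identity
`(∇μₐ × ∇μ_b) ⬝ ((vⱼ - vᵢ) × (vₖ - vᵢ))` is the Jacobian determinant of `(μₐ, μ_b)` in `(s, t)`,
so the three cross products have normal components `1, -1, 1`.
Hence the integrand is the constant `2 (μᵢ + μⱼ + μₖ) = 2`, and the unit triangle has area `1/2`. -/

def unitTriangle : Set (ℝ × ℝ) := {q | 0 ≤ q.1 ∧ 0 ≤ q.2 ∧ q.1 + q.2 ≤ 1}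

lemma measurableSet_unitTriangle : MeasurableSet unitTriangle :=
  (measurableSet_le measurable_const measurable_fst).inter
    ((measurableSet_le measurable_const measurable_snd).inter
      (measurableSet_le (measurable_fst.add measurable_snd) measurable_const))

lemma volume_preimage_mk_unitTriangle (x : ℝ) :
    volume (Prod.mk x ⁻¹' unitTriangle) =
      (Set.Icc 0 1).indicator (fun x ↦ ENNReal.ofReal (1 - x)) x := by
  by_cases hx : x ∈ Set.Icc (0 : ℝ) 1
  · have hslice : Prod.mk x ⁻¹' unitTriangle = Set.Icc 0 (1 - x) := by
      ext y
      simp only [unitTriangle, Set.mem_preimage, Set.mem_ofPred_eq, Set.mem_Icc]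
      constructor
      · rintro ⟨-, hy, hxy⟩
        exact ⟨hy, by linarith⟩
      · rintro ⟨hy, hxy⟩
        exact ⟨hx.1, hy, by linarith⟩
    rw [Set.indicator_of_mem hx, hslice, Real.volume_Icc, sub_zero]
  · have hslice : Prod.mk x ⁻¹' unitTriangle = ∅ := by
      ext y
      simp only [unitTriangle, Set.mem_preimage, Set.mem_ofPred_eq, Set.mem_empty_iff_false,
        iff_false]
      rintro ⟨hx0, hy, hxy⟩
      exact hx ⟨hx0, by linarith⟩
    rw [Set.indicator_of_notMem hx, hslice, measure_empty]

lemma measureReal_unitTriangle : volume.real unitTriangle = 1 / 2 := by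
  have hint : ∫ x in (0 : ℝ)..1, (1 - x) = 1 / 2 := by
    rw [intervalIntegral.integral_comp_sub_left (fun x ↦ x)]
    norm_num
  rw [measureReal_def, Measure.volume_eq_prod, Measure.prod_apply measurableSet_unitTriangle]
  simp only [volume_preimage_mk_unitTriangle]
  rw [lintegral_indicator measurableSet_Icc, ← ofReal_integral_eq_lintegral_ofReal,
    integral_Icc_eq_integral_Ioc, ← intervalIntegral.integral_of_le zero_le_one, hint,
    ENNReal.toReal_ofReal (by norm_num)]
  · exact (continuous_const.sub continuous_id).integrableOn_Icc
  · filter_upwards [ae_restrict_mem measurableSet_Icc] with x hx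
    exact sub_nonneg.2 hx.2

section Affine

variable {ι : Type*} [Fintype ι] {f : (ι → ℝ) → ℝ} {w : ι → ℝ}

lemma dotProduct_sub_of_affine (hf : ∀ x, f x = w ⬝ᵥ x + f 0) (x y : ι → ℝ) :
    w ⬝ᵥ (x - y) = f x - f y := by
  rw [dotProduct_sub, hf x, hf y]
  ring

lemma apply_add_smul_add_smul_of_affine (hf : ∀ x, f x = w ⬝ᵥ x + f 0)
    (a b c : ι → ℝ) (s t : ℝ) :
    f (a + s • (b - a) + t • (c - a)) = f a + s * (f b - f a) + t * (f c - f a) := by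
  rw [hf (a + _ + _), hf a, hf b, hf c]
  simp only [dotProduct_add, dotProduct_smul, dotProduct_sub, smul_eq_mul]
  ring

end Affine

lemma cross_dot_cross_sub_of_affine {f h : (Fin 3 → ℝ) → ℝ} {w u : Fin 3 → ℝ}
    (hf : ∀ x, f x = w ⬝ᵥ x + f 0) (hh : ∀ x, h x = u ⬝ᵥ x + h 0) (a b c : Fin 3 → ℝ) :
    (w ⨯₃ u) ⬝ᵥ ((b - a) ⨯₃ (c - a)) =
      (f b - f a) * (h c - h a) - (f c - f a) * (h b - h a) := by
  rw [cross_dot_cross, dotProduct_sub_of_affine hf, dotProduct_sub_of_affine hf,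
    dotProduct_sub_of_affine hh, dotProduct_sub_of_affine hh]

theorem whitney_face_flux_own_face_general
    (v : Fin 4 → (Fin 3 → ℝ))
    (μ : Fin 4 → (Fin 3 → ℝ) → ℝ) (g : Fin 4 → (Fin 3 → ℝ))
    (haff : ∀ l x, μ l x = g l ⬝ᵥ x + μ l 0)
    (hbar : ∀ l m, μ l (v m) = if l = m then 1 else 0)
    (i j k : Fin 4) (hij : i ≠ j) (hik : i ≠ k) (hjk : j ≠ k) :
    (∫ q in {q : ℝ × ℝ | 0 ≤ q.1 ∧ 0 ≤ q.2 ∧ q.1 + q.2 ≤ 1},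
      ((2 : ℝ) • (μ i (v i + q.1 • (v j - v i) + q.2 • (v k - v i)) • (g j ⨯₃ g k)
        - μ j (v i + q.1 • (v j - v i) + q.2 • (v k - v i)) • (g i ⨯₃ g k)
        + μ k (v i + q.1 • (v j - v i) + q.2 • (v k - v i)) • (g i ⨯₃ g j)))
        ⬝ᵥ ((v j - v i) ⨯₃ (v k - v i))) = 1 := by
  change ∫ q in unitTriangle, _ = 1
  rw [setIntegral_congr_fun measurableSet_unitTriangle (g := fun _ ↦ (2 : ℝ)), setIntegral_const,
    measureReal_unitTriangle, smul_eq_mul]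
  · norm_num
  · intro q _
    simp only [smul_dotProduct, add_dotProduct, sub_dotProduct,
      cross_dot_cross_sub_of_affine (haff _) (haff _),
      apply_add_smul_add_smul_of_affine (haff _), hbar, ↓reduceIte, if_neg hij, if_neg hik,
      if_neg hjk, if_neg hij.symm, if_neg hik.symm, if_neg hjk.symm, smul_eq_mul]
    ring

/-- Whitney interpolation on a tetrahedron reproduces the value 1 on its own face:
if `μ l` are the barycentric coordinate functions of an affinely independent quadruple
`(v₀, v₁, v₂, v₃)` in ℝ³ (affine functions with `μ l (v m) = δₗₘ` and constant gradient
`g l`), then the flux of the Whitney vector field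
`F = 2(μᵢ ∇μⱼ × ∇μₖ − μⱼ ∇μᵢ × ∇μₖ + μₖ ∇μᵢ × ∇μⱼ)` of the face `[vᵢ, vⱼ, vₖ]`
through that face equals 1. -/
theorem whitney_face_flux_own_face
    (v : Fin 4 → (Fin 3 → ℝ)) (hv : AffineIndependent ℝ v)
    (μ : Fin 4 → (Fin 3 → ℝ) → ℝ) (g : Fin 4 → (Fin 3 → ℝ))
    (haff : ∀ l x, μ l x = g l ⬝ᵥ x + μ l 0)
    (hbar : ∀ l m, μ l (v m) = if l = m then 1 else 0)
    (i j k : Fin 4) (hij : i ≠ j) (hik : i ≠ k) (hjk : j ≠ k) :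
    (∫ q in {q : ℝ × ℝ | 0 ≤ q.1 ∧ 0 ≤ q.2 ∧ q.1 + q.2 ≤ 1},
      ((2 : ℝ) • (μ i (v i + q.1 • (v j - v i) + q.2 • (v k - v i)) • (g j ⨯₃ g k)
        - μ j (v i + q.1 • (v j - v i) + q.2 • (v k - v i)) • (g i ⨯₃ g k)
        + μ k (v i + q.1 • (v j - v i) + q.2 • (v k - v i)) • (g i ⨯₃ g j)))
        ⬝ᵥ ((v j - v i) ⨯₃ (v k - v i))) = 1 :=
  whitney_face_flux_own_face_general v μ g haff hbar i j k hij hik hjk
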